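/- If f(z) = Σ_{n≥0} a_n z^n is holomorphic on the unit disk with |f(z)| ≤ 1, then Σ_{n≥0} |a_n| r^n ≤ 1 for all 0 ≤ r ≤ 1/3, and the constant 1/3 is optimal: for every r > 1/3 there exists such an f with Σ |a_n| r^n > 1. -/

import Mathlib

/-!
The heart of the matter is Wiener's inequality `‖a n‖ ≤ 1 - ‖a 0‖ ^ 2` for `n ≠ 0`. Averaging `f`
over the `n`-th roots of unity gives a holomorphic `h` bounded by `1` on the disc with
`h (z ^ n) = ∑ₘ a (n * m) * z ^ (n * m)`, so `h 0 = a 0` and `h' 0 = a n`, and the Schwarz–Pick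
bound `‖h' 0‖ ≤ 1 - ‖h 0‖ ^ 2` (Schwarz's lemma after a disc automorphism sending `h 0` to `0`)
applies. With `t = ‖a 0‖` and `r ≤ 1/3` this gives
`∑ ‖a n‖ rⁿ ≤ t + (1 - t ^ 2) r / (1 - r) ≤ 1 - (1 - t) ^ 2 / 2`.

For sharpness, the disc automorphism `(c - z) / (1 - c z)` has Bohr sum
`c + (1 - c ^ 2) r / (1 - c r)`, which exceeds `1` as soon as `c > (1 - r) / (2 r)`; such a `c < 1` exists exactly when `r > 1/3`.
-/

open Metric Complex Finset Set ComplexConjugate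

theorem normSq_one_sub_conj_mul_sub_normSq_sub (t u : ℂ) :
    normSq (1 - conj t * u) - normSq (u - t) = (1 - normSq t) * (1 - normSq u) := by
  simp only [normSq_apply, sub_re, sub_im, one_re, one_im, mul_re, mul_im, conj_re, conj_im]
  ring

theorem norm_sub_le_norm_one_sub_conj_mul {t u : ℂ} (ht : ‖t‖ ≤ 1) (hu : ‖u‖ ≤ 1) :
    ‖u - t‖ ≤ ‖1 - conj t * u‖ := by
  rw [← sq_le_sq₀ (norm_nonneg _) (norm_nonneg _), ← normSq_eq_norm_sq, ← normSq_eq_norm_sq,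
    ← sub_nonneg, normSq_one_sub_conj_mul_sub_normSq_sub, normSq_eq_norm_sq, normSq_eq_norm_sq]
  exact mul_nonneg (by nlinarith [norm_nonneg t]) (by nlinarith [norm_nonneg u])

theorem hasFPowerSeriesOnBall_ofScalars_of_hasSum {f : ℂ → ℂ} {a : ℕ → ℂ} {R : NNReal} (hR : 0 < R)
    (hf : ∀ z ∈ ball (0 : ℂ) R, HasSum (fun n => a n * z ^ n) (f z)) :
    HasFPowerSeriesOnBall f (FormalMultilinearSeries.ofScalars ℂ a) 0 R := by
  refine ⟨ENNReal.le_of_forall_nnreal_lt fun r hr => ?_, by simpa using hR, fun {y} hy => ?_⟩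
  · refine FormalMultilinearSeries.le_radius_of_summable _ ?_
    have hr' : (r : ℂ) ∈ ball (0 : ℂ) R := by simpa using hr
    simpa [FormalMultilinearSeries.ofScalars_norm] using (hf _ hr').summable.norm
  · rw [Metric.eball_coe] at hy
    simpa [FormalMultilinearSeries.ofScalars_apply_eq, mul_comm] using hf y hy

theorem eq_of_hasSum_mul_zero_pow {R : Type*} [Semiring R] [TopologicalSpace R] [T2Space R]
    {a : ℕ → R} {s : R} (h : HasSum (fun n => a n * 0 ^ n) s) :
    s = a 0 :=
  h.unique <| by simpa using hasSum_single (f := fun n => a n * 0 ^ n) 0 fun n hn => by simp [hn]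

theorem deriv_eq_zero_of_norm_eq_one {g : ℂ → ℂ} (hg : DifferentiableOn ℂ g (ball 0 1))
    (hmaps : MapsTo g (ball 0 1) (closedBall 0 1)) (h0 : ‖g 0‖ = 1) : deriv g 0 = 0 := by
  have hmax : IsLocalMax (norm ∘ g) 0 :=
    Filter.eventually_of_mem (ball_mem_nhds 0 one_pos) fun w hw => by
      simpa [h0] using hmaps hw
  have hconst := eventually_eq_of_isLocalMax_norm
    (Filter.eventually_of_mem (ball_mem_nhds 0 one_pos) fun w hw =>
      hg.differentiableAt (isOpen_ball.mem_nhds hw)) hmax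
  rw [Filter.EventuallyEq.deriv_eq hconst, deriv_const]

theorem norm_deriv_le_one_sub_sq_of_norm_lt_one {g : ℂ → ℂ} (hg : DifferentiableOn ℂ g (ball 0 1))
    (hmaps : MapsTo g (ball 0 1) (closedBall 0 1)) (h0 : ‖g 0‖ < 1) :
    ‖deriv g 0‖ ≤ 1 - ‖g 0‖ ^ 2 := by
  set t := g 0
  have hden : ∀ w ∈ ball (0 : ℂ) 1, 1 - conj t * g w ≠ 0 := by
    intro w hw h
    have : ‖conj t * g w‖ < 1 := by
      rw [norm_mul, RCLike.norm_conj]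
      exact mul_lt_one_of_nonneg_of_lt_one_left (norm_nonneg _) h0 (by simpa using hmaps hw)
    simp [← sub_eq_zero.mp h] at this
  set G : ℂ → ℂ := fun w => (g w - t) / (1 - conj t * g w)
  have hGd : DifferentiableOn ℂ G (ball 0 1) :=
    (hg.sub_const t).div ((differentiableOn_const _).sub ((differentiableOn_const _).mul hg)) hden
  have hGmaps : MapsTo G (ball 0 1) (closedBall (G 0) 1) := by
    intro w hw
    have h1 : ‖g w‖ ≤ 1 := by simpa using hmaps hw
    rw [show G 0 = 0 by simp [G, t], mem_closedBall_zero_iff, norm_div,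
      div_le_one (norm_pos_iff.mpr (hden w hw))]
    exact norm_sub_le_norm_one_sub_conj_mul h0.le h1
  have hdiff : DifferentiableAt ℂ g 0 := hg.differentiableAt (ball_mem_nhds 0 one_pos)
  have hnormSq : (1 : ℂ) - conj t * t = ((1 - ‖t‖ ^ 2 : ℝ) : ℂ) := by
    rw [mul_comm, mul_conj, normSq_eq_norm_sq]; push_cast; ring
  have hpos : 0 < 1 - ‖t‖ ^ 2 := by nlinarith [norm_nonneg t]
  have hden0 := hden 0 (mem_ball_self one_pos)
  have hGderiv : deriv G 0 = deriv g 0 / (1 - conj t * t) := by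
    have hG : HasDerivAt G ((deriv g 0 * (1 - conj t * t) - (t - t) * -(conj t * deriv g 0)) /
        (1 - conj t * t) ^ 2) 0 :=
      (hdiff.hasDerivAt.sub_const t).div ((hdiff.hasDerivAt.const_mul (conj t)).const_sub 1) hden0
    rw [hG.deriv, sub_self, zero_mul, sub_zero, sq, mul_div_mul_right _ _ hden0]
  have hschwarz := norm_deriv_le_one_of_mapsTo_ball hGd hGmaps one_pos
  rwa [hGderiv, hnormSq, norm_div, norm_real, Real.norm_of_nonneg hpos.le, div_le_one hpos]
    at hschwarz

theorem norm_deriv_le_one_sub_sq {g : ℂ → ℂ} (hg : DifferentiableOn ℂ g (ball 0 1))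
    (hmaps : MapsTo g (ball 0 1) (closedBall 0 1)) : ‖deriv g 0‖ ≤ 1 - ‖g 0‖ ^ 2 := by
  rcases (show ‖g 0‖ ≤ 1 by simpa using hmaps (mem_ball_self one_pos)).lt_or_eq with h0 | h0
  · exact norm_deriv_le_one_sub_sq_of_norm_lt_one hg hmaps h0
  · simp [deriv_eq_zero_of_norm_eq_one hg hmaps h0, h0]

theorem IsPrimitiveRoot.geom_sum_pow_eq_ite {R : Type*} [CommRing R] [IsDomain R] {ω : R} {n : ℕ}
    (hω : IsPrimitiveRoot ω n) (k : ℕ) :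
    ∑ j ∈ range n, (ω ^ k) ^ j = if n ∣ k then (n : R) else 0 := by
  split_ifs with hk
  · simp [(hω.pow_eq_one_iff_dvd k).mpr hk]
  · have hne : ω ^ k - 1 ≠ 0 := sub_ne_zero.mpr fun h => hk ((hω.pow_eq_one_iff_dvd k).mp h)
    refine (mul_eq_zero.mp ?_).resolve_right hne
    rw [geom_sum_mul, ← pow_mul, mul_comm, pow_mul, hω.pow_eq_one, one_pow, sub_self]

theorem hasSum_multisection {K : Type*} [Field K] [TopologicalSpace K] [IsTopologicalRing K]
    {n : ℕ} {ω : K} (hω : IsPrimitiveRoot ω n) (hn : (n : K) ≠ 0) {a : ℕ → K} {z : K}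
    {F : ℕ → K} (hF : ∀ j ∈ range n, HasSum (fun k => a k * (ω ^ j * z) ^ k) (F j)) :
    HasSum (fun m => a (n * m) * z ^ (n * m)) ((n : K)⁻¹ * ∑ j ∈ range n, F j) := by
  have hfilter : ∀ k, (n : K)⁻¹ * ∑ j ∈ range n, a k * (ω ^ j * z) ^ k
      = if n ∣ k then a k * z ^ k else 0 := by
    intro k
    calc (n : K)⁻¹ * ∑ j ∈ range n, a k * (ω ^ j * z) ^ k
        = (n : K)⁻¹ * (a k * z ^ k * ∑ j ∈ range n, (ω ^ k) ^ j) := by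
          rw [Finset.mul_sum (range n) _ (a k * z ^ k)]
          exact congrArg _ (sum_congr rfl fun j _ => by ring)
      _ = if n ∣ k then a k * z ^ k else 0 := by
          rw [hω.geom_sum_pow_eq_ite k]; split_ifs
          · field_simp
          · simp
  have hsum := (hasSum_sum hF).mul_left (n : K)⁻¹
  simp_rw [hfilter] at hsum
  have hinj : Function.Injective (n * ·) := mul_right_injective₀ fun h => hn (by simp [h])
  rw [← hinj.hasSum_iff fun k hk => if_neg fun ⟨m, hm⟩ => hk ⟨m, hm.symm⟩] at hsum
  simpa [Function.comp_def] using hsum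

theorem norm_inv_natCast_mul_sum_le_one {𝕜 : Type*} [RCLike 𝕜] {n : ℕ} {F : ℕ → 𝕜}
    (hF : ∀ j ∈ range n, ‖F j‖ ≤ 1) : ‖(n : 𝕜)⁻¹ * ∑ j ∈ range n, F j‖ ≤ 1 := by
  rcases n.eq_zero_or_pos with rfl | hn
  · simp
  rw [norm_mul, norm_inv, RCLike.norm_natCast, inv_mul_le_iff₀ (by positivity), mul_one]
  calc ‖∑ j ∈ range n, F j‖ ≤ ∑ j ∈ range n, ‖F j‖ := norm_sum_le _ _
    _ ≤ ∑ j ∈ range n, 1 := sum_le_sum hF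
    _ = n := by simp

theorem norm_coeff_le_one_sub_sq {f : ℂ → ℂ} {a : ℕ → ℂ}
    (hf : ∀ z ∈ ball (0 : ℂ) 1, HasSum (fun n => a n * z ^ n) (f z))
    (hb : ∀ z ∈ ball (0 : ℂ) 1, ‖f z‖ ≤ 1) {n : ℕ} (hn : n ≠ 0) :
    ‖a n‖ ≤ 1 - ‖a 0‖ ^ 2 := by
  have hω : IsPrimitiveRoot (exp (2 * Real.pi * I / n)) n := isPrimitiveRoot_exp n hn
  set h : ℂ → ℂ := fun w => ∑' m, a (n * m) * w ^ m
  have hh : ∀ w ∈ ball (0 : ℂ) 1, HasSum (fun m => a (n * m) * w ^ m) (h w) ∧ ‖h w‖ ≤ 1 := by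
    intro w hw
    obtain ⟨z, rfl⟩ := IsAlgClosed.exists_pow_nat_eq w (Nat.pos_of_ne_zero hn)
    have hz : ∀ j, exp (2 * Real.pi * I / n) ^ j * z ∈ ball (0 : ℂ) 1 := by
      intro j
      rw [mem_ball_zero_iff, norm_pow] at hw
      rw [mem_ball_zero_iff, norm_mul, norm_pow, hω.norm'_eq_one hn, one_pow, one_mul]
      exact (pow_lt_one_iff_of_nonneg (norm_nonneg z) hn).mp hw
    have hsum := hasSum_multisection hω (Nat.cast_ne_zero.mpr hn) fun j _ => hf _ (hz j)
    simp only [pow_mul] at hsum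
    rw [show h (z ^ n) = _ from hsum.tsum_eq]
    exact ⟨hsum, norm_inv_natCast_mul_sum_le_one fun j _ => hb _ (hz j)⟩
  have hps := hasFPowerSeriesOnBall_ofScalars_of_hasSum one_pos fun w hw => (hh w hw).1
  have hd : DifferentiableOn ℂ h (ball 0 1) := by
    simpa only [Metric.eball_coe, NNReal.coe_one] using hps.differentiableOn
  have := norm_deriv_le_one_sub_sq hd fun w hw => by simpa using (hh w hw).2
  rw [hps.hasFPowerSeriesAt.deriv, eq_of_hasSum_mul_zero_pow (hh 0 (mem_ball_self one_pos)).1]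
    at this
  simpa [FormalMultilinearSeries.ofScalars_apply_eq] using this

theorem tsum_mul_pow_le_one {c : ℕ → ℝ} (hc : ∀ n, 0 ≤ c n) (hcn : ∀ n ≠ 0, c n ≤ 1 - c 0 ^ 2)
    {r : ℝ} (hr0 : 0 ≤ r) (hr : r ≤ 1 / 3) : ∑' n, c n * r ^ n ≤ 1 := by
  have hr1 : r < 1 := by linarith
  have hc0 : 0 ≤ 1 - c 0 ^ 2 := (hc 1).trans (hcn 1 one_ne_zero)
  have hmajor : HasSum (fun n => (1 - c 0 ^ 2) * r * r ^ n) ((1 - c 0 ^ 2) * r * (1 - r)⁻¹) :=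
    (hasSum_geometric_of_lt_one hr0 hr1).mul_left _
  have hle : ∀ n, c (n + 1) * r ^ (n + 1) ≤ (1 - c 0 ^ 2) * r * r ^ n := fun n => by
    rw [pow_succ', ← mul_assoc]
    exact mul_le_mul_of_nonneg_right
      (mul_le_mul_of_nonneg_right (hcn _ n.succ_ne_zero) hr0) (pow_nonneg hr0 n)
  have htail : Summable fun n => c (n + 1) * r ^ (n + 1) :=
    hmajor.summable.of_nonneg_of_le (fun n => mul_nonneg (hc _) (pow_nonneg hr0 _)) hle
  have hfrac : r * (1 - r)⁻¹ ≤ 1 / 2 := by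
    rw [mul_inv_le_iff₀ (by linarith)]; linarith
  calc ∑' n, c n * r ^ n = c 0 + ∑' n, c (n + 1) * r ^ (n + 1) := by
        rw [(htail.hasSum.zero_add (f := fun n => c n * r ^ n)).tsum_eq, pow_zero, mul_one]
    _ ≤ c 0 + (1 - c 0 ^ 2) * r * (1 - r)⁻¹ := by
        gcongr; exact hasSum_le hle htail.hasSum hmajor
    _ ≤ c 0 + (1 - c 0 ^ 2) * (1 / 2) := by
        rw [mul_assoc]; gcongr
    _ ≤ 1 := by nlinarith [sq_nonneg (1 - c 0)]

def blaschkeCoeff (c : ℝ) : ℕ → ℂ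
  | 0 => c
  | n + 1 => -((1 - c ^ 2) * c ^ n : ℝ)

theorem hasSum_blaschkeCoeff_mul_pow {c : ℝ} {z : ℂ} (hcz : ‖c * z‖ < 1) :
    HasSum (fun n => blaschkeCoeff c n * z ^ n) ((c - z) / (1 - c * z)) := by
  have hden : 1 - (c : ℂ) * z ≠ 0 := fun h => by simp [← sub_eq_zero.mp h] at hcz
  have htail : HasSum (fun n => blaschkeCoeff c (n + 1) * z ^ (n + 1))
      (-(1 - (c : ℂ) ^ 2) * z * (1 - c * z)⁻¹) :=
    ((hasSum_geometric_of_norm_lt_one hcz).mul_left _).congr_fun fun n => by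
      simp only [blaschkeCoeff]
      push_cast
      ring
  have h := htail.zero_add (f := fun n => blaschkeCoeff c n * z ^ n)
  convert h using 1
  simp only [blaschkeCoeff, pow_zero, mul_one]
  field_simp
  ring

theorem hasSum_norm_blaschkeCoeff_mul_pow {c r : ℝ} (hc0 : 0 ≤ c) (hc1 : c ≤ 1) (hr0 : 0 ≤ r)
    (hcr : c * r < 1) :
    HasSum (fun n => ‖blaschkeCoeff c n‖ * r ^ n) (c + (1 - c ^ 2) * r / (1 - c * r)) := by
  have hc2 : 0 ≤ 1 - c ^ 2 := by nlinarith
  have htail : HasSum (fun n => ‖blaschkeCoeff c (n + 1)‖ * r ^ (n + 1))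
      ((1 - c ^ 2) * r / (1 - c * r)) :=
    ((hasSum_geometric_of_lt_one (mul_nonneg hc0 hr0) hcr).mul_left _).congr_fun fun n => by
      rw [blaschkeCoeff, norm_neg, norm_real, Real.norm_of_nonneg (by positivity)]
      ring
  have h := htail.zero_add (f := fun n => ‖blaschkeCoeff c n‖ * r ^ n)
  rwa [blaschkeCoeff, norm_real, Real.norm_of_nonneg hc0, pow_zero, mul_one] at h

theorem exists_tsum_norm_mul_pow_gt_one {r : ℝ} (hr : 1 / 3 < r) (hr1 : r < 1) :
    ∃ (f : ℂ → ℂ) (a : ℕ → ℂ),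
      (∀ z ∈ ball (0 : ℂ) 1, HasSum (fun n : ℕ => a n * z ^ n) (f z))
      ∧ (∀ z ∈ ball (0 : ℂ) 1, ‖f z‖ ≤ 1)
      ∧ 1 < ∑' n : ℕ, ‖a n‖ * r ^ n := by
  obtain ⟨c, hc, hc1⟩ : ∃ c, (1 - r) / (2 * r) < c ∧ c < 1 :=
    exists_between ((div_lt_one (by linarith)).mpr (by linarith))
  have hc0 : 0 < c := (div_pos (by linarith) (by linarith)).trans hc
  have hcz : ∀ z ∈ ball (0 : ℂ) 1, ‖(c : ℂ) * z‖ < 1 := fun z hz => by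
    rw [norm_mul, norm_real, Real.norm_of_nonneg hc0.le]
    exact mul_lt_one_of_nonneg_of_lt_one_left hc0.le hc1 (mem_ball_zero_iff.mp hz).le
  refine ⟨fun z => (c - z) / (1 - c * z), blaschkeCoeff c,
    fun z hz => hasSum_blaschkeCoeff_mul_pow (hcz z hz), fun z hz => ?_, ?_⟩
  · have hden : 1 - (c : ℂ) * z ≠ 0 := fun h => by simpa [← sub_eq_zero.mp h] using hcz z hz
    have hmob := norm_sub_le_norm_one_sub_conj_mul (t := c) (u := z)
      (by simpa [abs_of_pos hc0] using hc1.le) (mem_ball_zero_iff.mp hz).le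
    rwa [conj_ofReal, norm_sub_rev, ← div_le_one (norm_pos_iff.mpr hden), ← norm_div] at hmob
  · rw [(hasSum_norm_blaschkeCoeff_mul_pow hc0.le hc1.le (by linarith) (by nlinarith)).tsum_eq,
      ← sub_lt_iff_lt_add', lt_div_iff₀ (by nlinarith)]
    rw [div_lt_iff₀ (by linarith)] at hc
    nlinarith

theorem stmt_2 :
    (∀ (f : ℂ → ℂ) (a : ℕ → ℂ),
        (∀ z ∈ ball (0 : ℂ) 1, HasSum (fun n : ℕ => a n * z ^ n) (f z)) →
        (∀ z ∈ ball (0 : ℂ) 1, ‖f z‖ ≤ 1) →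
        ∀ r : ℝ, 0 ≤ r → r ≤ 1 / 3 → ∑' n : ℕ, ‖a n‖ * r ^ n ≤ 1)
    ∧ ∀ r : ℝ, 1 / 3 < r → r < 1 →
        ∃ (f : ℂ → ℂ) (a : ℕ → ℂ),
          (∀ z ∈ ball (0 : ℂ) 1, HasSum (fun n : ℕ => a n * z ^ n) (f z))
          ∧ (∀ z ∈ ball (0 : ℂ) 1, ‖f z‖ ≤ 1)
          ∧ 1 < ∑' n : ℕ, ‖a n‖ * r ^ n :=
  ⟨fun _ a hf hb _ hr0 hr => tsum_mul_pow_le_one (c := fun n => ‖a n‖) (fun _ => norm_nonneg _)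
      (fun _ hn => norm_coeff_le_one_sub_sq hf hb hn) hr0 hr,
    fun _ hr hr1 => exists_tsum_norm_mul_pow_gt_one hr hr1⟩
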